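/- arXiv:1605.07647 — 2 statements merged into one kernel-verified Lean document; each statement's English description precedes it below -/
import Mathlib

section
/- Fix j ≥ 2 and positive parameters. Any tuple (S, I_1, …, I_j, R, S̃, Ĩ) with I_1 ≠ 0 satisfying all of the equilibrium equations has I_1 = S̄²·μ_s·μ̃_s·(R_0² − 1)/(f·c·S̄·μ_s·ξ + S̄_v·f²·c·c_v·ξ). -/
open Finset

/-- The coefficients `c_0 = 1`, `c_k = α_k/(α_{k+1}+μ_{k+1})` for `1 ≤ k ≤ j−2`, and
`c_{j−1} = α_{j−1}/(γ+μ_j)` of the relapsing host–vector model. -/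
noncomputable def ccoef (j : ℕ) (γ : ℝ) (α μ : ℕ → ℝ) : ℕ → ℝ := fun k =>
  if k = 0 then 1
  else if k = j - 1 then α (j - 1) / (γ + μ j)
  else α k / (α (k + 1) + μ (k + 1))

/-- `ξ = Σ_{k=1}^{j} c_0·c_1⋯c_{k−1}`. -/
noncomputable def xiSum (j : ℕ) (γ : ℝ) (α μ : ℕ → ℝ) : ℝ :=
  ∑ k ∈ Icc 1 j, ∏ l ∈ range k, ccoef j γ α μ l

/-- The equilibrium equations of the single host–vector relapsing disease model with
`j` infected compartments, restricted to constant populations `N = S̄`, `Ñ = S̄_v`. -/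
def IsEquilib (j : ℕ) (f c cv γ Sb Sbv μs μr μts μt : ℝ) (α μ : ℕ → ℝ)
    (S R St It : ℝ) (I : ℕ → ℝ) : Prop :=
  μs * (Sb - S) = f * cv * It * S / Sb ∧
  f * cv * It * S / Sb = (α 1 + μ 1) * I 1 ∧
  (∀ k, 2 ≤ k → k ≤ j - 1 → α (k - 1) * I (k - 1) = (α k + μ k) * I k) ∧
  α (j - 1) * I (j - 1) = (γ + μ j) * I j ∧
  γ * I j = μr * R ∧
  μts * (Sbv - St) = f * c * St / Sb * ∑ k ∈ Icc 1 j, I k ∧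
  f * c * St / Sb * ∑ k ∈ Icc 1 j, I k = μt * It ∧
  It = Sbv - St

/-! At an equilibrium the infected compartments are proportional to `I_1`, `I_k = c_0⋯c_{k-1}·I_1`,
so the total infected host population is `ξ·I_1`. The vector equations then express `Ĩ` through
`ξ·I_1`, and the host equations express `S` through `I_1`; substituting both into the infection
balance `f·c_v·Ĩ·S/S̄ = (α_1+μ_1)·I_1` and cancelling the factor `I_1 ≠ 0` leaves an equation that
is linear in `I_1`. -/

theorem eq_prod_range_mul_of_succ_eq {M : Type*} [CommMonoid M] {x c : ℕ → M} {j : ℕ}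
    (h0 : c 0 = 1) (hstep : ∀ n, 1 ≤ n → n < j → x (n + 1) = c n * x n) :
    ∀ k, 1 ≤ k → k ≤ j → x k = (∏ l ∈ range k, c l) * x 1 := by
  intro k hk
  induction k, hk using Nat.le_induction with
  | base => simp [h0]
  | succ n hn ih =>
    intro hnj
    rw [hstep n hn hnj, ih (by omega), prod_range_succ]
    ac_rfl

section Positivity

variable {j : ℕ} {γ : ℝ} {α μ : ℕ → ℝ}

theorem ccoef_pos (hγ : 0 < γ) (hα : ∀ k, 1 ≤ k → k ≤ j - 1 → 0 < α k)
    (hμ : ∀ k, 1 ≤ k → k ≤ j → 0 < μ k) {l : ℕ} (hl : l ≤ j - 1) : 0 < ccoef j γ α μ l := by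
  unfold ccoef
  split_ifs with h0 hlast
  · exact one_pos
  · exact div_pos (hα _ (by omega) le_rfl) (add_pos hγ (hμ j (by omega) le_rfl))
  · exact div_pos (hα l (by omega) hl)
      (add_pos (hα _ (by omega) (by omega)) (hμ _ (by omega) (by omega)))

theorem xiSum_pos (hj : 1 ≤ j) (hγ : 0 < γ) (hα : ∀ k, 1 ≤ k → k ≤ j - 1 → 0 < α k)
    (hμ : ∀ k, 1 ≤ k → k ≤ j → 0 < μ k) : 0 < xiSum j γ α μ := by
  refine sum_pos (fun k hk => prod_pos fun l hl => ccoef_pos hγ hα hμ ?_) ⟨1, by simpa using hj⟩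
  rw [mem_Icc] at hk
  rw [mem_range] at hl
  omega

end Positivity

namespace IsEquilib

variable {j : ℕ} {f c cv γ Sb Sbv μs μr μts μt : ℝ} {α μ : ℕ → ℝ} {S R St It : ℝ} {I : ℕ → ℝ}

theorem infected_succ_eq (h : IsEquilib j f c cv γ Sb Sbv μs μr μts μt α μ S R St It I)
    (hγ : 0 < γ) (hα : ∀ k, 1 ≤ k → k ≤ j - 1 → 0 < α k)
    (hμ : ∀ k, 1 ≤ k → k ≤ j → 0 < μ k) {n : ℕ} (hn : 1 ≤ n) (hnj : n < j) :
    I (n + 1) = ccoef j γ α μ n * I n := by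
  obtain ⟨-, -, hmid, hlast, -⟩ := h
  have solve : ∀ {a d x y : ℝ}, 0 < d → a * x = d * y → y = a / d * x := fun hd hxy => by
    rw [div_mul_eq_mul_div, eq_div_iff hd.ne']
    linarith
  unfold ccoef
  rw [if_neg (by omega)]
  split_ifs with hlast'
  · obtain rfl : j = n + 1 := by omega
    exact solve (add_pos hγ (hμ _ (by omega) le_rfl)) hlast
  · have hstep := hmid (n + 1) (by omega) (by omega)
    rw [Nat.add_sub_cancel] at hstep
    exact solve (add_pos (hα _ (by omega) (by omega)) (hμ _ (by omega) (by omega))) hstep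

theorem sum_infected_eq (h : IsEquilib j f c cv γ Sb Sbv μs μr μts μt α μ S R St It I)
    (hγ : 0 < γ) (hα : ∀ k, 1 ≤ k → k ≤ j - 1 → 0 < α k)
    (hμ : ∀ k, 1 ≤ k → k ≤ j → 0 < μ k) :
    ∑ k ∈ Icc 1 j, I k = xiSum j γ α μ * I 1 := by
  have hprop := eq_prod_range_mul_of_succ_eq (x := I) (if_pos rfl)
    fun n hn hnj => h.infected_succ_eq hγ hα hμ hn hnj
  rw [xiSum, sum_mul]
  exact sum_congr rfl fun k hk => hprop k (mem_Icc.1 hk).1 (mem_Icc.1 hk).2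

theorem infected_vector_mul_eq (h : IsEquilib j f c cv γ Sb Sbv μs μr μts μt α μ S R St It I)
    (hSb : Sb ≠ 0) :
    It * (f * c * ∑ k ∈ Icc 1 j, I k + μt * Sb) = Sbv * (f * c * ∑ k ∈ Icc 1 j, I k) := by
  obtain ⟨-, -, -, -, -, -, hbalance, hIt⟩ := h
  rw [div_mul_eq_mul_div, div_eq_iff hSb] at hbalance
  rw [hIt] at hbalance ⊢
  linear_combination -hbalance

theorem host_infection_balance (h : IsEquilib j f c cv γ Sb Sbv μs μr μts μt α μ S R St It I)
    (hSb : Sb ≠ 0) :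
    f * cv * It * (μs * Sb - (α 1 + μ 1) * I 1) = (α 1 + μ 1) * I 1 * Sb * μs := by
  obtain ⟨hsusc, hinf, -⟩ := h
  have hS : μs * (Sb - S) = (α 1 + μ 1) * I 1 := hsusc.trans hinf
  rw [div_eq_iff hSb] at hinf
  linear_combination μs * hinf + f * cv * It * hS

theorem linear_eq_of_infected_one_ne_zero (h : IsEquilib j f c cv γ Sb Sbv μs μr μts μt α μ S R St It I)
    (hγ : 0 < γ) (hα : ∀ k, 1 ≤ k → k ≤ j - 1 → 0 < α k)
    (hμ : ∀ k, 1 ≤ k → k ≤ j → 0 < μ k) (hSb : Sb ≠ 0) (hI1 : I 1 ≠ 0) :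
    f ^ 2 * c * cv * Sbv * xiSum j γ α μ * (μs * Sb - (α 1 + μ 1) * I 1)
      = (α 1 + μ 1) * Sb * μs * (f * c * xiSum j γ α μ * I 1 + μt * Sb) := by
  have hvec := h.infected_vector_mul_eq hSb
  rw [h.sum_infected_eq hγ hα hμ] at hvec
  refine mul_left_cancel₀ hI1 ?_
  linear_combination (f * c * xiSum j γ α μ * I 1 + μt * Sb) * h.host_infection_balance hSb
    - f * cv * (μs * Sb - (α 1 + μ 1) * I 1) * hvec

end IsEquilib

theorem stmt1_general (j : ℕ) (hj : 2 ≤ j)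
    (f c cv γ Sb Sbv μs μr μts μt : ℝ) (α μ : ℕ → ℝ)
    (hf : 0 < f) (hc : 0 < c) (hcv : 0 < cv) (hγ : 0 < γ)
    (hSb : 0 < Sb) (hSbv : 0 < Sbv) (hμs : 0 < μs)
    (hμt : 0 < μt)
    (hα : ∀ k, 1 ≤ k → k ≤ j - 1 → 0 < α k)
    (hμ : ∀ k, 1 ≤ k → k ≤ j → 0 < μ k)
    (hμeq : μt = μts)
    (R0sq : ℝ)
    (hR0sq : R0sq = f ^ 2 * c * cv * Sbv * xiSum j γ α μ / (Sb * μt * (α 1 + μ 1)))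
    (S R St It : ℝ) (I : ℕ → ℝ) (hI1 : I 1 ≠ 0)
    (heq : IsEquilib j f c cv γ Sb Sbv μs μr μts μt α μ S R St It I) :
    I 1 = Sb ^ 2 * μs * μts * (R0sq - 1) /
      (f * c * Sb * μs * xiSum j γ α μ + Sbv * f ^ 2 * c * cv * xiSum j γ α μ) := by
  subst hμeq hR0sq
  have hrel := heq.linear_eq_of_infected_one_ne_zero hγ hα hμ hSb.ne' hI1
  have hξ : 0 < xiSum j γ α μ := xiSum_pos (by omega) hγ hα hμ
  have hA : 0 < α 1 + μ 1 := add_pos (hα 1 le_rfl (by omega)) (hμ 1 le_rfl (by omega))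
  rw [eq_div_iff (by positivity)]
  field_simp
  linear_combination -hrel

/-- Any equilibrium tuple `(S, I_1, …, I_j, R, S̃, Ĩ)` with `I_1 ≠ 0`
has `I_1 = S̄²·μ_s·μ̃_s·(R_0² − 1)/(f·c·S̄·μ_s·ξ + S̄_v·f²·c·c_v·ξ)`. -/
theorem stmt1 (j : ℕ) (hj : 2 ≤ j)
    (f c cv γ Sb Sbv μs μr μts μt : ℝ) (α μ : ℕ → ℝ)
    (hf : 0 < f) (hc : 0 < c) (hcv : 0 < cv) (hγ : 0 < γ)
    (hSb : 0 < Sb) (hSbv : 0 < Sbv) (hμs : 0 < μs) (hμr : 0 < μr)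
    (hμts : 0 < μts) (hμt : 0 < μt)
    (hα : ∀ k, 1 ≤ k → k ≤ j - 1 → 0 < α k)
    (hμ : ∀ k, 1 ≤ k → k ≤ j → 0 < μ k)
    (hμeq : μt = μts)
    (R0sq : ℝ)
    (hR0sq : R0sq = f ^ 2 * c * cv * Sbv * xiSum j γ α μ / (Sb * μt * (α 1 + μ 1)))
    (S R St It : ℝ) (I : ℕ → ℝ) (hI1 : I 1 ≠ 0)
    (heq : IsEquilib j f c cv γ Sb Sbv μs μr μts μt α μ S R St It I) :
    I 1 = Sb ^ 2 * μs * μts * (R0sq - 1) /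
      (f * c * Sb * μs * xiSum j γ α μ + Sbv * f ^ 2 * c * cv * xiSum j γ α μ) :=
  stmt1_general j hj f c cv γ Sb Sbv μs μr μts μt α μ hf hc hcv hγ hSb hSbv hμs hμt hα hμ hμeq R0sq
    hR0sq S R St It I hI1 heq
end

section
/- If R_0 = 1, then the coefficient of λ in p(λ), namely Σ_{i=1}^{j+1} Π_{m≠i, 1≤m≤j+1} ξ_m − (f²·c·c_v·S̄_v/S̄)·Σ_{k=0}^{j−2} α_0⋯α_k·Σ_{i=k+2}^{j} Π_{m=k+2, m≠i}^{j} ξ_m, is nonzero. Together with p(0) = 0 when R_0 = 1, this shows that 0 is a simple root of p, i.e. the zero eigenvalue of the Jacobian of the relapsing host–vector model at the disease-free equilibrium is simple when R_0 = 1. -/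
open Finset

/-!
Write `P = ξ₁⋯ξⱼ` and `K = f²·c·c_v·S̄_v/S̄`. Since `∏_{m ≠ i} ξ_m = P·ξ_{j+1}/ξᵢ`, the coefficient
equals `P + ξ_{j+1}·P·Σ_{i ≤ j} ξᵢ⁻¹ − K·Σₖ α₀⋯αₖ·ξ_{k+2}⋯ξⱼ·Σ_{i=k+2}^{j} ξᵢ⁻¹`.
Clearing denominators in `R₀ = 1` gives `ξ_{j+1}·P = K·Σ_{k<j} α₀⋯αₖ·ξ_{k+2}⋯ξⱼ`, so the subtracted
term is dominated termwise by the middle one, and the coefficient is at least `P > 0`.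
-/

theorem Finset.sum_prod_erase_eq_prod_mul_sum_inv {ι K : Type*} [DecidableEq ι] [Field K]
    (s : Finset ι) (ξ : ι → K) (hξ : ∀ i ∈ s, ξ i ≠ 0) :
    ∑ i ∈ s, ∏ m ∈ s.erase i, ξ m = (∏ m ∈ s, ξ m) * ∑ i ∈ s, (ξ i)⁻¹ := by
  rw [mul_sum]
  refine sum_congr rfl fun i hi => ?_
  rw [← div_eq_mul_inv, eq_div_iff (hξ i hi), prod_erase_mul _ _ hi]

theorem Finset.prod_Icc_one_mul_prod_Icc_add_two {M : Type*} [CommMonoid M] (ξ : ℕ → M)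
    {k j : ℕ} (hkj : k < j) :
    (∏ m ∈ Icc 1 (k + 1), ξ m) * ∏ m ∈ Icc (k + 2) j, ξ m = ∏ m ∈ Icc 1 j, ξ m := by
  have hIoc (a b : ℕ) : Icc (a + 1) b = Ioc a b := Icc_add_one_left_eq_Ioc a b
  rw [hIoc 0, hIoc 0, hIoc (k + 1)]
  exact prod_Ioc_consecutive ξ (Nat.zero_le _) hkj

theorem mul_prod_eq_of_reproduction_number_eq_one (j : ℕ) (α ξ : ℕ → ℝ) (K : ℝ)
    (hξ : ∀ i ∈ Icc 1 (j + 1), 0 < ξ i)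
    (hR : K / ξ (j + 1) * ∑ k ∈ Icc 1 j, (∏ l ∈ Icc 0 (k - 1), α l) / ∏ l ∈ Icc 1 k, ξ l = 1) :
    ξ (j + 1) * ∏ m ∈ Icc 1 j, ξ m =
      K * ∑ k ∈ range j, (∏ l ∈ Icc 0 k, α l) * ∏ m ∈ Icc (k + 2) j, ξ m := by
  have hξj : ξ (j + 1) ≠ 0 := (hξ _ (by simp)).ne'
  rw [div_mul_eq_mul_div, div_eq_one_iff_eq hξj] at hR
  rw [← hR, mul_assoc, sum_mul, ← Ico_add_one_right_eq_Icc, sum_Ico_eq_sum_range,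
    Nat.add_sub_cancel]
  congr 1
  refine sum_congr rfl fun k hk => ?_
  have hkj : k < j := mem_range.mp hk
  have hΞ : 0 < ∏ l ∈ Icc 1 (k + 1), ξ l :=
    prod_pos fun l hl => hξ l (by simp only [mem_Icc] at hl ⊢; omega)
  rw [Nat.add_sub_cancel_left, add_comm 1 k, Ico_add_one_right_eq_Icc,
    ← prod_Icc_one_mul_prod_Icc_add_two ξ hkj]
  field_simp

/-- The coefficient of `λ` in `p(λ)`, with `K = f²·c·c_v·S̄_v/S̄`. -/
def linearCoeff (j : ℕ) (α ξ : ℕ → ℝ) (K : ℝ) : ℝ :=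
  (∑ i ∈ Icc 1 (j + 1), ∏ m ∈ (Icc 1 (j + 1)).erase i, ξ m) -
    K * ∑ k ∈ range (j - 1), (∏ l ∈ Icc 0 k, α l) *
      ∑ i ∈ Icc (k + 2) j, ∏ m ∈ (Icc (k + 2) j).erase i, ξ m

theorem linearCoeff_pos (j : ℕ) (α ξ : ℕ → ℝ) (K : ℝ)
    (hξ : ∀ i ∈ Icc 1 (j + 1), 0 < ξ i) (hα : ∀ l < j, 0 ≤ α l)
    (hR : ξ (j + 1) * ∏ m ∈ Icc 1 j, ξ m =
      K * ∑ k ∈ range j, (∏ l ∈ Icc 0 k, α l) * ∏ m ∈ Icc (k + 2) j, ξ m) :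
    0 < linearCoeff j α ξ K := by
  have hξ' : ∀ k, ∀ i ∈ Icc (k + 1) j, 0 < ξ i := fun k i hi =>
    hξ i (by simp only [mem_Icc] at hi ⊢; omega)
  set P := ∏ m ∈ Icc 1 j, ξ m
  set T := ∑ i ∈ Icc 1 j, (ξ i)⁻¹
  have hP : 0 < P := prod_pos (hξ' 0)
  have hinv : ∀ i ∈ Icc 1 j, 0 ≤ (ξ i)⁻¹ := fun i hi => (inv_pos.mpr (hξ' 0 i hi)).le
  have hw : ∀ k < j, 0 ≤ (∏ l ∈ Icc 0 k, α l) * ∏ m ∈ Icc (k + 2) j, ξ m := fun k hk =>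
    mul_nonneg (prod_nonneg fun l hl => hα l (by simp only [mem_Icc] at hl; omega))
      (prod_nonneg fun m hm => (hξ' (k + 1) m hm).le)
  have hK : 0 ≤ K := by
    refine (pos_of_mul_pos_left (hR ▸ mul_pos (hξ _ (by simp)) hP) ?_).le
    exact sum_nonneg fun k hk => hw k (mem_range.mp hk)
  have hfirst : ∑ i ∈ Icc 1 (j + 1), ∏ m ∈ (Icc 1 (j + 1)).erase i, ξ m =
      P + ξ (j + 1) * P * T := by
    rw [sum_prod_erase_eq_prod_mul_sum_inv _ _ fun i hi => (hξ i hi).ne',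
      prod_Icc_succ_top (by omega), sum_Icc_succ_top (by omega), mul_add,
      mul_inv_cancel_right₀ (hξ _ (by simp)).ne']
    ring
  have hsecond (k : ℕ) : ∑ i ∈ Icc (k + 2) j, ∏ m ∈ (Icc (k + 2) j).erase i, ξ m =
      (∏ m ∈ Icc (k + 2) j, ξ m) * ∑ i ∈ Icc (k + 2) j, (ξ i)⁻¹ :=
    sum_prod_erase_eq_prod_mul_sum_inv _ _ fun i hi => (hξ' (k + 1) i hi).ne'
  have hle : K * ∑ k ∈ range (j - 1), (∏ l ∈ Icc 0 k, α l) *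
        ((∏ m ∈ Icc (k + 2) j, ξ m) * ∑ i ∈ Icc (k + 2) j, (ξ i)⁻¹) ≤
      ξ (j + 1) * P * T := by
    rw [hR, mul_assoc, sum_mul]
    refine mul_le_mul_of_nonneg_left ?_ hK
    calc _ ≤ ∑ k ∈ range (j - 1), (∏ l ∈ Icc 0 k, α l) * (∏ m ∈ Icc (k + 2) j, ξ m) * T := by
          refine sum_le_sum fun k hk => ?_
          rw [← mul_assoc]
          refine mul_le_mul_of_nonneg_left ?_ (hw k (by simp only [mem_range] at hk; omega))
          exact sum_le_sum_of_subset_of_nonneg (Icc_subset_Icc (by omega) le_rfl)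
            fun i hi _ => hinv i hi
      _ ≤ _ := sum_le_sum_of_subset_of_nonneg (range_subset_range.mpr (by omega))
          fun k hk _ => mul_nonneg (hw k (mem_range.mp hk)) (sum_nonneg hinv)
  rw [linearCoeff, hfirst]
  simp only [hsecond]
  linarith

theorem stmt14_general (j : ℕ)
    (α μ : ℕ → ℝ) (γ μt f c cv Sb Sbv R0 : ℝ)
    (hα0 : α 0 = 1)
    (hα : ∀ i, 1 ≤ i → i ≤ j - 1 → 0 < α i)
    (hμ : ∀ i, 1 ≤ i → i ≤ j → 0 < μ i)
    (hγ : 0 < γ) (hμt : 0 < μt)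
    (ξ : ℕ → ℝ)
    (hξ : ∀ i, 1 ≤ i → i ≤ j - 1 → ξ i = α i + μ i)
    (hξj : ξ j = γ + μ j) (hξj1 : ξ (j + 1) = μt)
    (hR0sq : R0 ^ 2 = f ^ 2 * c * cv * Sbv / (Sb * ξ (j + 1)) *
      ∑ k ∈ Icc 1 j, (∏ l ∈ Icc 0 (k - 1), α l) / ∏ l ∈ Icc 1 k, ξ l)
    (hR0one : R0 = 1) :
    (∑ i ∈ Icc 1 (j + 1), ∏ m ∈ (Icc 1 (j + 1)).erase i, ξ m) -
        f ^ 2 * c * cv * Sbv / Sb *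
          ∑ k ∈ range (j - 1), (∏ l ∈ Icc 0 k, α l) *
            ∑ i ∈ Icc (k + 2) j, ∏ m ∈ (Icc (k + 2) j).erase i, ξ m ≠ 0 := by
  have hξpos : ∀ i ∈ Icc 1 (j + 1), 0 < ξ i := by
    intro i hi
    obtain ⟨h1, h2⟩ := mem_Icc.mp hi
    rcases (show i = j + 1 ∨ i = j ∨ i ≤ j - 1 by omega) with rfl | rfl | h
    · rw [hξj1]; exact hμt
    · rw [hξj]; exact add_pos hγ (hμ i h1 le_rfl)
    · rw [hξ i h1 h]; exact add_pos (hα i h1 h) (hμ i h1 (by omega))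
  have hαnonneg : ∀ l < j, 0 ≤ α l := by
    rintro (_ | l) hl
    · rw [hα0]; exact zero_le_one
    · exact (hα _ (by omega) (by omega)).le
  rw [hR0one, one_pow, div_mul_eq_div_div, eq_comm] at hR0sq
  exact (linearCoeff_pos j α ξ _ hξpos hαnonneg
    (mul_prod_eq_of_reproduction_number_eq_one j α ξ _ hξpos hR0sq)).ne'

/-- When `R_0 = 1` the coefficient of `λ` in
`p(λ) = Π_{i=1}^{j+1}(λ+ξ_i) − (f²·c·c_v·S̄_v/S̄)·Σ_{i=0}^{j−1} α_0⋯α_i·Π_{m=i+2}^{j}(λ+ξ_m)`,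
namely
`Σ_{i=1}^{j+1} Π_{m≠i} ξ_m − (f²·c·c_v·S̄_v/S̄)·Σ_{k=0}^{j−2} α_0⋯α_k·Σ_{i=k+2}^{j} Π_{m=k+2,m≠i}^{j} ξ_m`,
is nonzero; hence `0` is a simple root of `p`, i.e. the zero eigenvalue of the Jacobian
of the relapsing host–vector model at the disease-free equilibrium is simple. -/
theorem stmt14 (j : ℕ) (hj : 1 ≤ j)
    (α μ : ℕ → ℝ) (γ μt f c cv Sb Sbv R0 : ℝ)
    (hα0 : α 0 = 1)
    (hα : ∀ i, 1 ≤ i → i ≤ j - 1 → 0 < α i)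
    (hμ : ∀ i, 1 ≤ i → i ≤ j → 0 < μ i)
    (hγ : 0 < γ) (hμt : 0 < μt) (hf : 0 < f) (hc : 0 < c) (hcv : 0 < cv)
    (hSb : 0 < Sb) (hSbv : 0 < Sbv)
    (ξ : ℕ → ℝ)
    (hξ : ∀ i, 1 ≤ i → i ≤ j - 1 → ξ i = α i + μ i)
    (hξj : ξ j = γ + μ j) (hξj1 : ξ (j + 1) = μt)
    (hR0 : 0 < R0)
    (hR0sq : R0 ^ 2 = f ^ 2 * c * cv * Sbv / (Sb * ξ (j + 1)) *
      ∑ k ∈ Icc 1 j, (∏ l ∈ Icc 0 (k - 1), α l) / ∏ l ∈ Icc 1 k, ξ l)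
    (hR0one : R0 = 1) :
    (∑ i ∈ Icc 1 (j + 1), ∏ m ∈ (Icc 1 (j + 1)).erase i, ξ m) -
        f ^ 2 * c * cv * Sbv / Sb *
          ∑ k ∈ range (j - 1), (∏ l ∈ Icc 0 k, α l) *
            ∑ i ∈ Icc (k + 2) j, ∏ m ∈ (Icc (k + 2) j).erase i, ξ m ≠ 0 :=
  stmt14_general j α μ γ μt f c cv Sb Sbv R0 hα0 hα hμ hγ hμt ξ hξ hξj hξj1 hR0sq hR0one
end
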